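/- For any vectors u (with ||u||_2 = 1), w, and u_star in R^p with <u, u_star> >= 0, and any vectors a in R^n, b in R^n such that <a, Xu> <= 0 where iso denotes projection onto the monotone cone of Xu: if a = g(Xu_star) - iso_{Xu}(g(Xu_star)) and g is L-Lipschitz monotone, then <a, X P_u^perp u_star> >= (1/L) ||a||_2^2, where P_u^perp u_star = u_star - u <u, u_star>. -/

import Mathlib

/-!
Write `a = g(s) - w` with `s = X u⋆`. Since `w` is the projection of `g(s)` onto the monotone cone
of `Xu`, first-order optimality gives `⟨a, q⟩ ≤ 0` for every `q` in the cone (in particular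
`q = Xu`), and, because `w` may be moved up or down on one of its level sets without leaving the
cone, `a` sums to zero on each level set of `w`. On a level set `{w = c}` both `a = g(s) - c` and
`s - a / L` are nondecreasing functions of `s` (the latter since `g` is `L`-Lipschitz), so
Chebyshev's sum inequality gives `⟨a, s - a / L⟩ ≥ 0`, i.e. `⟨a, s⟩ ≥ ‖a‖² / L`. Finally
`⟨a, X P_u^⊥ u⋆⟩ = ⟨a, s⟩ - ⟨u, u⋆⟩ ⟨a, Xu⟩ ≥ ⟨a, s⟩`.
-/

open Finset Filter Topology

def monotoneCone {ι : Type*} (x : ι → ℝ) : Set (ι → ℝ) :=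
  {z | ∀ i j, x i ≤ x j → z i ≤ z j}

section MonotoneCone

variable {ι : Type*} {x w q : ι → ℝ}

theorem self_mem_monotoneCone (x : ι → ℝ) : x ∈ monotoneCone x := fun _ _ h => h

theorem add_smul_mem_monotoneCone (hw : w ∈ monotoneCone x) (hq : q ∈ monotoneCone x) {t : ℝ}
    (ht : 0 ≤ t) : w + t • q ∈ monotoneCone x := fun i j hij =>
  add_le_add (hw i j hij) (mul_le_mul_of_nonneg_left (hq i j hij) ht)

theorem eventually_add_smul_fiber_mem_monotoneCone [Finite ι] (hw : w ∈ monotoneCone x) (c : ℝ) :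
    ∀ᶠ t in 𝓝 (0 : ℝ), w + t • (fun i => if w i = c then 1 else 0) ∈ monotoneCone x := by
  simp only [monotoneCone, Set.mem_ofPred_eq, eventually_all]
  intro i j hij
  have hwij := hw i j hij
  by_cases hi : w i = c <;> by_cases hj : w j = c <;>
    simp only [Pi.add_apply, Pi.smul_apply, smul_eq_mul, hi, hj, if_true, if_false, mul_one,
      mul_zero, add_zero]
  · exact Eventually.of_forall fun _ => le_rfl
  · filter_upwards [eventually_lt_nhds (sub_pos.2 (lt_of_le_of_ne (hi ▸ hwij) (Ne.symm hj)))]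
    intro t ht
    linarith
  · filter_upwards [eventually_gt_nhds (sub_neg.2 (lt_of_le_of_ne (hj ▸ hwij) hi))]
    intro t ht
    linarith
  · exact Eventually.of_forall fun _ => hwij

end MonotoneCone

section FirstOrderCondition

variable {ι : Type*} [Fintype ι] {K : Set (ι → ℝ)} {y w q : ι → ℝ}

theorem sum_sub_mul_nonpos_of_isMinOn (hmin : IsMinOn (fun z => ∑ i, (y i - z i) ^ 2) K w)
    (hq : ∀ᶠ t in 𝓝[>] (0 : ℝ), w + t • q ∈ K) : ∑ i, (y i - w i) * q i ≤ 0 := by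
  set c := ∑ i, (y i - w i) * q i
  set S := ∑ i, q i ^ 2
  have hsmall : ∀ᶠ t in 𝓝[>] (0 : ℝ), 2 * c ≤ t * S := by
    filter_upwards [hq, self_mem_nhdsWithin] with t hmem (ht : 0 < t)
    have hle : ∑ i, (y i - w i) ^ 2 ≤ ∑ i, (y i - (w + t • q) i) ^ 2 := hmin hmem
    have hexpand : ∑ i, (y i - (w + t • q) i) ^ 2 = ∑ i, (y i - w i) ^ 2 - 2 * t * c + t ^ 2 * S := by
      simp only [c, S, Pi.add_apply, Pi.smul_apply, smul_eq_mul, mul_sum, ← sum_sub_distrib,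
        ← sum_add_distrib]
      exact sum_congr rfl fun i _ => by ring
    nlinarith
  have hlim : Tendsto (fun t => t * S) (𝓝[>] (0 : ℝ)) (𝓝 0) := by
    exact ((continuous_mul_const S).tendsto' 0 0 (zero_mul S)).mono_left nhdsWithin_le_nhds
  linarith [ge_of_tendsto hlim hsmall]

theorem sum_sub_mul_eq_zero_of_isMinOn (hmin : IsMinOn (fun z => ∑ i, (y i - z i) ^ 2) K w)
    (hq : ∀ᶠ t in 𝓝 (0 : ℝ), w + t • q ∈ K) : ∑ i, (y i - w i) * q i = 0 := by
  have hneg : ∀ᶠ t in 𝓝 (0 : ℝ), w + t • (-q) ∈ K := by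
    have := (continuous_neg.tendsto' (0 : ℝ) 0 neg_zero).eventually hq
    simpa only [neg_smul, smul_neg] using this
  have h₁ := sum_sub_mul_nonpos_of_isMinOn hmin (hq.filter_mono nhdsWithin_le_nhds)
  have h₂ := sum_sub_mul_nonpos_of_isMinOn hmin (hneg.filter_mono nhdsWithin_le_nhds)
  simp only [Pi.neg_apply, mul_neg, sum_neg_distrib] at h₂
  linarith

variable {x : ι → ℝ}

theorem sum_sub_mul_nonpos_of_isMinOn_monotoneCone
    (hmin : IsMinOn (fun z => ∑ i, (y i - z i) ^ 2) (monotoneCone x) w)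
    (hw : w ∈ monotoneCone x) (hq : q ∈ monotoneCone x) : ∑ i, (y i - w i) * q i ≤ 0 :=
  sum_sub_mul_nonpos_of_isMinOn hmin <|
    eventually_nhdsWithin_of_forall fun _ ht => add_smul_mem_monotoneCone hw hq (le_of_lt ht)

theorem sum_fiber_sub_eq_zero_of_isMinOn_monotoneCone
    (hmin : IsMinOn (fun z => ∑ i, (y i - z i) ^ 2) (monotoneCone x) w)
    (hw : w ∈ monotoneCone x) (c : ℝ) : ∑ i ∈ univ.filter (fun i => w i = c), (y i - w i) = 0 := by
  simpa only [mul_ite, mul_one, mul_zero, ← sum_filter] using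
    sum_sub_mul_eq_zero_of_isMinOn hmin (eventually_add_smul_fiber_mem_monotoneCone hw c)

end FirstOrderCondition

section Chebyshev

variable {ι : Type*}

theorem MonovaryOn.sum_mul_nonneg_of_sum_eq_zero {s : Finset ι} {f g : ι → ℝ}
    (h : MonovaryOn f g s) (hf : ∑ i ∈ s, f i = 0) : 0 ≤ ∑ i ∈ s, f i * g i := by
  have hcheb := h.sum_mul_sum_le_card_mul_sum
  rw [hf, zero_mul] at hcheb
  rcases s.eq_empty_or_nonempty with rfl | hs
  · simp
  · exact nonneg_of_mul_nonneg_right hcheb (by exact_mod_cast hs.card_pos)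

theorem sum_mul_nonneg_of_sum_fiber_eq_zero [Fintype ι] {a v w : ι → ℝ}
    (hfib : ∀ c, ∑ i ∈ univ.filter (fun i => w i = c), a i = 0)
    (hmv : ∀ c, MonovaryOn a v {i | w i = c}) : 0 ≤ ∑ i, a i * v i := by
  rw [← sum_fiberwise_of_maps_to (t := univ.image w) fun i _ => mem_image_of_mem w (mem_univ i)]
  refine sum_nonneg fun c _ => MonovaryOn.sum_mul_nonneg_of_sum_eq_zero ?_ (hfib c)
  simpa only [coe_filter, mem_univ, true_and] using hmv c

theorem monovaryOn_sub_sub_div_of_lipschitz {g : ℝ → ℝ} {L : ℝ} (hL : 0 < L)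
    (hg_mono : Monotone g) (hg_lip : ∀ t₀ t₁, t₀ ≤ t₁ → g t₁ - g t₀ ≤ L * (t₁ - t₀))
    (s w : ι → ℝ) (c : ℝ) :
    MonovaryOn (fun i => g (s i) - w i) (fun i => s i - (g (s i) - w i) / L) {i | w i = c} := by
  intro i (hi : w i = c) j (hj : w j = c) hlt
  simp only [hi, hj] at hlt ⊢
  by_contra! hgt
  have hs : s j ≤ s i := le_of_lt (hg_mono.reflect_lt (by linarith))
  have hdiv : (g (s i) - c) / L - (g (s j) - c) / L ≤ s i - s j := by
    rw [div_sub_div_same, div_le_iff₀ hL]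
    linarith [hg_lip _ _ hs]
  linarith

theorem one_div_mul_sum_sq_le_sum_mul [Fintype ι] {g : ℝ → ℝ} {L : ℝ} (hL : 0 < L)
    (hg_mono : Monotone g) (hg_lip : ∀ t₀ t₁, t₀ ≤ t₁ → g t₁ - g t₀ ≤ L * (t₁ - t₀))
    {s w : ι → ℝ} (hfib : ∀ c, ∑ i ∈ univ.filter (fun i => w i = c), (g (s i) - w i) = 0) :
    1 / L * ∑ i, (g (s i) - w i) ^ 2 ≤ ∑ i, (g (s i) - w i) * s i := by
  have h := sum_mul_nonneg_of_sum_fiber_eq_zero hfib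
    (monovaryOn_sub_sub_div_of_lipschitz hL hg_mono hg_lip s w)
  have hsplit : ∑ i, (g (s i) - w i) * (s i - (g (s i) - w i) / L)
      = ∑ i, (g (s i) - w i) * s i - 1 / L * ∑ i, (g (s i) - w i) ^ 2 := by
    rw [mul_sum, ← sum_sub_distrib]
    exact sum_congr rfl fun i _ => by ring
  linarith

end Chebyshev

theorem stmt_11_general (n p : ℕ) (L : ℝ) (hL : 0 < L)
    (g : ℝ → ℝ)
    (hg : ∀ t0 t1 : ℝ, t0 ≤ t1 → 0 ≤ g t1 - g t0 ∧ g t1 - g t0 ≤ L * (t1 - t0))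
    (X : Fin n → Fin p → ℝ) (u ustar : Fin p → ℝ)
    (hinner : 0 ≤ ∑ j, u j * ustar j)
    (Xu : Fin n → ℝ) (hXu : Xu = fun i => ∑ j, X i j * u j)
    (w : Fin n → ℝ)
    (hmono : ∀ i j, Xu i ≤ Xu j → w i ≤ w j)
    (hmin : ∀ z : Fin n → ℝ, (∀ i j, Xu i ≤ Xu j → z i ≤ z j) →
      ∑ i, (g (∑ j, X i j * ustar j) - w i) ^ 2 ≤
        ∑ i, (g (∑ j, X i j * ustar j) - z i) ^ 2)
    (a : Fin n → ℝ) (ha : a = fun i => g (∑ j, X i j * ustar j) - w i)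
    (Pu : Fin p → ℝ) (hPu : Pu = fun j => ustar j - (∑ l, u l * ustar l) * u j) :
    (1 / L) * ∑ i, a i ^ 2 ≤ ∑ i, a i * ∑ j, X i j * Pu j := by
  set s : Fin n → ℝ := fun i => ∑ j, X i j * ustar j
  have hmin' : IsMinOn (fun z => ∑ i, (g (s i) - z i) ^ 2) (monotoneCone Xu) w := hmin
  have hg_mono : Monotone g := fun t₀ t₁ h => sub_nonneg.1 (hg t₀ t₁ h).1
  have hs_bound := one_div_mul_sum_sq_le_sum_mul hL hg_mono (fun t₀ t₁ h => (hg t₀ t₁ h).2)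
    (sum_fiber_sub_eq_zero_of_isMinOn_monotoneCone hmin' hmono)
  have hXu_nonpos := sum_sub_mul_nonpos_of_isMinOn_monotoneCone hmin' hmono
    (self_mem_monotoneCone Xu)
  have hXPu : ∀ i, ∑ j, X i j * Pu j = s i - (∑ l, u l * ustar l) * Xu i := fun i => by
    simp only [s, hPu, hXu, mul_sum, ← sum_sub_distrib]
    exact sum_congr rfl fun j _ => by ring
  subst ha
  simp only [hXPu, mul_sub, sum_sub_distrib, mul_left_comm _ (∑ l, u l * ustar l), ← mul_sum]
  linarith [mul_nonneg hinner (neg_nonneg.2 hXu_nonpos)]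

/-- For the isotonic residual `a = g(Xu⋆) - iso_{Xu}(g(Xu⋆))` of an `L`-Lipschitz
monotone `g`, with `u` a unit vector satisfying `⟨u, u⋆⟩ ≥ 0`, the inner product
with `X P_u^⊥ u⋆` is at least `(1/L) ‖a‖²`, where `P_u^⊥ u⋆ = u⋆ - ⟨u,u⋆⟩ u`. -/
theorem stmt_11 (n p : ℕ) (L : ℝ) (hL : 0 < L)
    (g : ℝ → ℝ)
    (hg : ∀ t0 t1 : ℝ, t0 ≤ t1 → 0 ≤ g t1 - g t0 ∧ g t1 - g t0 ≤ L * (t1 - t0))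
    (X : Fin n → Fin p → ℝ) (u ustar : Fin p → ℝ)
    (hunorm : ∑ j, u j ^ 2 = 1)
    (hinner : 0 ≤ ∑ j, u j * ustar j)
    (Xu : Fin n → ℝ) (hXu : Xu = fun i => ∑ j, X i j * u j)
    (w : Fin n → ℝ)
    (hmono : ∀ i j, Xu i ≤ Xu j → w i ≤ w j)
    (hmin : ∀ z : Fin n → ℝ, (∀ i j, Xu i ≤ Xu j → z i ≤ z j) →
      ∑ i, (g (∑ j, X i j * ustar j) - w i) ^ 2 ≤
        ∑ i, (g (∑ j, X i j * ustar j) - z i) ^ 2)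
    (a : Fin n → ℝ) (ha : a = fun i => g (∑ j, X i j * ustar j) - w i)
    (Pu : Fin p → ℝ) (hPu : Pu = fun j => ustar j - (∑ l, u l * ustar l) * u j) :
    (1 / L) * ∑ i, a i ^ 2 ≤ ∑ i, a i * ∑ j, X i j * Pu j :=
  stmt_11_general n p L hL g hg X u ustar hinner Xu hXu w hmono hmin a ha Pu hPu
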